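/- If the lead time forecast is based on a single past observation (m = 1) and σ_D² > 0, then the bullwhip effect measure equals Var(q_t)/Var(D_t) = 2σ_L²μ_D²/σ_D² + 2μ_L²/n² + 2(μ_L + σ_L²)/n + 1 for every t ∈ ℤ. -/

import Mathlib

/-!
Write `a = L_{t-1}`, `b = L_{t-2}` and `X k = D_{t-1-k}`. Then
`q_t = ∑_{k=0}^{n} A_k X_k` with `A_0 = a/n + 1`, `A_n = -b/n` and `A_k = (a - b)/n` otherwise.
The coefficients are functions of lead times only, hence independent of the uncorrelated demands,
and for such sums `Var(∑ A_k X_k) = σ_D² ∑ E[A_k²] + μ_D² Var(∑ A_k)`.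
Here `∑ A_k = a - b + 1`, whose variance is `2σ_L²`.
-/

open MeasureTheory ProbabilityTheory Finset

section EndpointsCoeff

variable {α : Type*} (n : ℕ) (u v w : α)

def endpointsCoeff (k : ℕ) : α :=
  if k = 0 then u else if k = n then w else v

variable {n u v w}

theorem endpointsCoeff_zero : endpointsCoeff n u v w 0 = u := if_pos rfl

theorem endpointsCoeff_self (hn : n ≠ 0) : endpointsCoeff n u v w n = w := by
  simp [endpointsCoeff, hn]

theorem endpointsCoeff_of_pos_of_lt {k : ℕ} (hk₀ : 0 < k) (hkn : k < n) :
    endpointsCoeff n u v w k = v := by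
  simp [endpointsCoeff, hk₀.ne', hkn.ne]

theorem apply_endpointsCoeff {β : Type*} (f : α → β) (k : ℕ) :
    f (endpointsCoeff n u v w k) = endpointsCoeff n (f u) (f v) (f w) k := by
  unfold endpointsCoeff; split_ifs <;> rfl

theorem endpointsCoeff_induction {p : α → Prop} (hu : p u) (hv : p v) (hw : p w) (k : ℕ) :
    p (endpointsCoeff n u v w k) := by
  unfold endpointsCoeff; split_ifs <;> assumption

theorem sum_range_succ_endpointsCoeff {M : Type*} [AddCommMonoid M] (hn : n ≠ 0)
    (f : ℕ → α → M) :
    ∑ k ∈ range (n + 1), f k (endpointsCoeff n u v w k)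
      = f 0 u + ∑ k ∈ range (n - 1), f (k + 1) v + f n w := by
  obtain ⟨m, rfl⟩ := Nat.exists_eq_add_one_of_ne_zero hn
  rw [sum_range_succ, sum_range_succ', endpointsCoeff_self hn, endpointsCoeff_zero,
    Nat.add_sub_cancel, add_comm (∑ k ∈ range m, _)]
  congr 2
  exact sum_congr rfl fun k hk => by
    rw [endpointsCoeff_of_pos_of_lt k.succ_pos (by simpa using mem_range.1 hk)]

end EndpointsCoeff

theorem Finset.sum_Icc_one_eq_sum_range {M : Type*} [AddCommMonoid M] (f : ℕ → M) (n : ℕ) :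
    ∑ i ∈ Icc 1 n, f i = ∑ i ∈ range n, f (i + 1) := by
  rw [range_eq_Ico, sum_Ico_add', ← Ico_add_one_right_eq_Icc, zero_add]

theorem moving_average_order_eq_sum_endpointsCoeff {n : ℕ} (hn : n ≠ 0) (a b : ℝ)
    (x : ℕ → ℝ) :
    a * ((n : ℝ)⁻¹ * ∑ i ∈ range n, x i) - b * ((n : ℝ)⁻¹ * ∑ i ∈ range n, x (i + 1)) + x 0
      = ∑ k ∈ range (n + 1),
          endpointsCoeff n ((n : ℝ)⁻¹ * a + 1) ((n : ℝ)⁻¹ * (a - b)) (-((n : ℝ)⁻¹ * b)) k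
            * x k := by
  rw [sum_range_succ_endpointsCoeff hn (fun k c => c * x k), ← mul_sum]
  obtain ⟨m, rfl⟩ := Nat.exists_eq_add_one_of_ne_zero hn
  rw [sum_range_succ', sum_range_succ, Nat.add_sub_cancel]
  ring

section Independence

variable {Ω : Type*} {mΩ : MeasurableSpace Ω} {P : Measure Ω}

theorem ProbabilityTheory.iIndepFun.exists_indep_inl_inr [IsZeroOrProbabilityMeasure P]
    {ι κ : Type*} {β : ι ⊕ κ → Type*} {mβ : ∀ i, MeasurableSpace (β i)} {f : ∀ i, Ω → β i}
    (hf : iIndepFun f P) (hmeas : ∀ i, Measurable (f i)) :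
    ∃ m₁ m₂ : MeasurableSpace Ω, Indep m₁ m₂ P ∧ (∀ i, Measurable[m₁] (f (.inl i)))
      ∧ ∀ j, Measurable[m₂] (f (.inr j)) := by
  have hdisj : Disjoint (Set.range (Sum.inl : ι → ι ⊕ κ)) (Set.range Sum.inr) :=
    Set.disjoint_range_iff.2 fun _ _ => Sum.inl_ne_inr
  have hindep := indep_iSup_of_disjoint (m := fun i => (mβ i).comap (f i))
    (fun i => (hmeas i).comap_le) hf.iIndep hdisj
  simp only [iSup_range] at hindep
  exact ⟨_, _, hindep,
    fun i => Measurable.of_comap_le (le_iSup (fun i => (mβ (.inl i)).comap (f (.inl i))) i),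
    fun j => Measurable.of_comap_le (le_iSup (fun j => (mβ (.inr j)).comap (f (.inr j))) j)⟩

theorem ProbabilityTheory.IndepFun.variance_fun_sub [IsFiniteMeasure P] {X Y : Ω → ℝ}
    (hX : MemLp X 2 P) (hY : MemLp Y 2 P) (h : IndepFun X Y P) :
    Var[fun ω => X ω - Y ω; P] = Var[X; P] + Var[Y; P] := by
  rw [ProbabilityTheory.variance_fun_sub hX hY, h.covariance_eq_zero hX hY]
  ring

variable {m₁ m₂ : MeasurableSpace Ω}

theorem ProbabilityTheory.Indep.indepFun_of_measurable {β γ : Type*} [MeasurableSpace β]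
    [MeasurableSpace γ] (h : Indep m₁ m₂ P) {f : Ω → β} {g : Ω → γ}
    (hf : Measurable[m₁] f) (hg : Measurable[m₂] g) : IndepFun f g P :=
  indep_of_indep_of_le_right (indep_of_indep_of_le_left h hf.comap_le) hg.comap_le

theorem ProbabilityTheory.Indep.memLp_two_mul [IsFiniteMeasure P] (h : Indep m₁ m₂ P)
    {U V : Ω → ℝ} (hUm : Measurable[m₁] U) (hVm : Measurable[m₂] V) (hU : MemLp U 2 P)
    (hV : MemLp V 2 P) :
    MemLp (fun ω => U ω * V ω) 2 P := by
  refine (memLp_two_iff_integrable_sq (hU.1.mul hV.1)).2 ?_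
  have := (h.indepFun_of_measurable (hUm.pow_const 2) (hVm.pow_const 2)).integrable_mul
    hU.integrable_sq hV.integrable_sq
  convert this using 2 with ω
  exact mul_pow (U ω) (V ω) 2

theorem ProbabilityTheory.Indep.covariance_mul_mul [IsProbabilityMeasure P] (h : Indep m₁ m₂ P)
    {U U' V V' : Ω → ℝ} (hUm : Measurable[m₁] U) (hU'm : Measurable[m₁] U')
    (hVm : Measurable[m₂] V) (hV'm : Measurable[m₂] V') (hU : MemLp U 2 P) (hU' : MemLp U' 2 P)
    (hV : MemLp V 2 P) (hV' : MemLp V' 2 P) :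
    cov[fun ω => U ω * V ω, fun ω => U' ω * V' ω; P]
      = P[U * U'] * cov[V, V'; P] + cov[U, U'; P] * (P[V] * P[V']) := by
  have hUV : P[fun ω => U ω * V ω] = P[U] * P[V] :=
    (h.indepFun_of_measurable hUm hVm).integral_fun_mul_eq_mul_integral hU.1 hV.1
  have hU'V' : P[fun ω => U' ω * V' ω] = P[U'] * P[V'] :=
    (h.indepFun_of_measurable hU'm hV'm).integral_fun_mul_eq_mul_integral hU'.1 hV'.1
  have hUU'VV' : P[(fun ω => U ω * V ω) * fun ω => U' ω * V' ω] = P[U * U'] * P[V * V'] := by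
    rw [← (h.indepFun_of_measurable (hUm.mul hU'm) (hVm.mul hV'm)).integral_mul_eq_mul_integral
      (hU.1.mul hU'.1) (hV.1.mul hV'.1)]
    congr 1 with ω
    simp only [Pi.mul_apply]
    ring
  rw [covariance_eq_sub (h.memLp_two_mul hUm hVm hU hV) (h.memLp_two_mul hU'm hV'm hU' hV'),
    covariance_eq_sub hV hV', covariance_eq_sub hU hU', hUV, hU'V', hUU'VV']
  ring

theorem ProbabilityTheory.Indep.variance_sum_mul [IsProbabilityMeasure P] (h : Indep m₁ m₂ P)
    {ι : Type*} {s : Finset ι} {A D : ι → Ω → ℝ} {μ σ2 : ℝ}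
    (hAm : ∀ k ∈ s, Measurable[m₁] (A k)) (hDm : ∀ k ∈ s, Measurable[m₂] (D k))
    (hA : ∀ k ∈ s, MemLp (A k) 2 P) (hD : ∀ k ∈ s, MemLp (D k) 2 P)
    (hDD : ∀ k ∈ s, ∀ l ∈ s, k ≠ l → IndepFun (D k) (D l) P)
    (hμ : ∀ k ∈ s, P[D k] = μ) (hσ : ∀ k ∈ s, Var[D k; P] = σ2) :
    Var[fun ω => ∑ k ∈ s, A k ω * D k ω; P]
      = σ2 * ∑ k ∈ s, P[A k ^ 2] + μ ^ 2 * Var[fun ω => ∑ k ∈ s, A k ω; P] := by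
  classical
  have hcovD : ∀ k ∈ s, ∀ l ∈ s, cov[D k, D l; P] = if k = l then σ2 else 0 := by
    intro k hk l hl
    split_ifs with hkl
    · rw [hkl, covariance_self (hD l hl).aemeasurable, hσ l hl]
    · exact (hDD k hk l hl hkl).covariance_eq_zero (hD k hk) (hD l hl)
  rw [variance_fun_sum' (X := fun k ω => A k ω * D k ω)
      (fun k hk => h.memLp_two_mul (hAm k hk) (hDm k hk) (hA k hk) (hD k hk)),
    variance_fun_sum' hA, mul_sum, mul_sum, ← sum_add_distrib]
  refine sum_congr rfl fun k hk => ?_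
  have hdiag : σ2 * P[A k ^ 2] = ∑ l ∈ s, if k = l then σ2 * P[A k ^ 2] else 0 := by
    rw [sum_ite_eq, if_pos hk]
  rw [hdiag, mul_sum, ← sum_add_distrib]
  refine sum_congr rfl fun l hl => ?_
  rw [h.covariance_mul_mul (hAm k hk) (hAm l hl) (hDm k hk) (hDm l hl) (hA k hk) (hA l hl)
    (hD k hk) (hD l hl), hcovD k hk l hl, hμ k hk, hμ l hl]
  split_ifs with hkl
  · subst hkl; rw [pow_two]; ring
  · ring

end Independence

section Order

variable {Ω : Type*} {mΩ : MeasurableSpace Ω} {P : Measure Ω} [IsProbabilityMeasure P]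

theorem integral_sq_eq_variance_add_sq {X : Ω → ℝ} (hX : MemLp X 2 P) :
    P[X ^ 2] = Var[X; P] + P[X] ^ 2 := by
  rw [variance_eq_sub hX]; ring

theorem sum_integral_sq_endpointsCoeff {a b : Ω → ℝ} {μL σL2 : ℝ} (hab : IndepFun a b P)
    (ha : MemLp a 2 P) (hb : MemLp b 2 P) (hμa : P[a] = μL) (hμb : P[b] = μL)
    (hσa : Var[a; P] = σL2) (hσb : Var[b; P] = σL2) {n : ℕ} (hn : n ≠ 0) :
    ∑ k ∈ range (n + 1), P[endpointsCoeff n (fun ω => (n : ℝ)⁻¹ * a ω + 1)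
        (fun ω => (n : ℝ)⁻¹ * (a ω - b ω)) (fun ω => -((n : ℝ)⁻¹ * b ω)) k ^ 2]
      = (n : ℝ)⁻¹ ^ 2 * (σL2 + (μL + n) ^ 2 + (n - 1) * (2 * σL2) + (σL2 + μL ^ 2)) := by
  set c := (n : ℝ)⁻¹
  have hU : P[(fun ω => c * a ω + 1) ^ 2] = c ^ 2 * σL2 + (c * μL + 1) ^ 2 := by
    rw [integral_sq_eq_variance_add_sq (X := fun ω => c * a ω + 1)
        ((ha.const_mul c).add (memLp_const 1)),
      variance_add_const (ha.const_mul c).1, variance_const_mul, hσa,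
      integral_add ((ha.const_mul c).integrable one_le_two) (integrable_const 1),
      integral_const_mul, hμa]
    simp
  have hV : P[(fun ω => c * (a ω - b ω)) ^ 2] = c ^ 2 * (2 * σL2) := by
    rw [integral_sq_eq_variance_add_sq (X := fun ω => c * (a ω - b ω)) ((ha.sub hb).const_mul c),
      variance_const_mul, hab.variance_fun_sub ha hb, hσa, hσb, integral_const_mul,
      integral_sub (ha.integrable one_le_two) (hb.integrable one_le_two), hμa, hμb]
    ring
  have hW : P[(fun ω => -(c * b ω)) ^ 2] = c ^ 2 * σL2 + (c * μL) ^ 2 := by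
    rw [integral_sq_eq_variance_add_sq (X := fun ω => -(c * b ω)) (hb.const_mul c).neg,
      variance_fun_neg, variance_const_mul, hσb, integral_neg, integral_const_mul, hμb]
    ring
  rw [sum_range_succ_endpointsCoeff hn (fun _ (Y : Ω → ℝ) => ∫ ω, (Y ^ 2) ω ∂P), hU, hV, hW,
    sum_const, card_range, nsmul_eq_mul, Nat.cast_sub (Nat.one_le_iff_ne_zero.2 hn)]
  have : (n : ℝ) ≠ 0 := Nat.cast_ne_zero.2 hn
  simp only [c]
  field_simp
  ring

theorem variance_moving_average_order {m₁ m₂ : MeasurableSpace Ω} (h : Indep m₁ m₂ P)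
    {a b : Ω → ℝ} {μL σL2 : ℝ} (ham : Measurable[m₁] a) (hbm : Measurable[m₁] b)
    (hab : IndepFun a b P) (ha : MemLp a 2 P) (hb : MemLp b 2 P) (hμa : P[a] = μL)
    (hμb : P[b] = μL) (hσa : Var[a; P] = σL2) (hσb : Var[b; P] = σL2)
    {X : ℕ → Ω → ℝ} {μD σD2 : ℝ} (hXm : ∀ i, Measurable[m₂] (X i)) (hX : ∀ i, MemLp (X i) 2 P)
    (hXX : Pairwise fun i j => IndepFun (X i) (X j) P) (hμX : ∀ i, P[X i] = μD)
    (hσX : ∀ i, Var[X i; P] = σD2) {n : ℕ} (hn : n ≠ 0) :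
    Var[fun ω => a ω * ((n : ℝ)⁻¹ * ∑ i ∈ range n, X i ω)
        - b ω * ((n : ℝ)⁻¹ * ∑ i ∈ range n, X (i + 1) ω) + X 0 ω; P]
      = σD2 * ((n : ℝ)⁻¹ ^ 2 * (σL2 + (μL + n) ^ 2 + (n - 1) * (2 * σL2) + (σL2 + μL ^ 2)))
        + μD ^ 2 * (2 * σL2) := by
  set A := endpointsCoeff n (fun ω => (n : ℝ)⁻¹ * a ω + 1) (fun ω => (n : ℝ)⁻¹ * (a ω - b ω))
    (fun ω => -((n : ℝ)⁻¹ * b ω))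
  have hA : ∀ k ω, A k ω = endpointsCoeff n ((n : ℝ)⁻¹ * a ω + 1) ((n : ℝ)⁻¹ * (a ω - b ω))
      (-((n : ℝ)⁻¹ * b ω)) k :=
    fun k ω => apply_endpointsCoeff (fun Y : Ω → ℝ => Y ω) k
  have hsumA : (fun ω => ∑ k ∈ range (n + 1), A k ω) = fun ω => a ω - b ω + 1 := by
    funext ω
    have := moving_average_order_eq_sum_endpointsCoeff hn (a ω) (b ω) fun _ => 1
    simp only [hA, mul_one, sum_const, card_range, nsmul_one] at this ⊢
    rw [← this, inv_mul_cancel₀ (Nat.cast_ne_zero.2 hn)]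
    ring
  calc _ = Var[fun ω => ∑ k ∈ range (n + 1), A k ω * X k ω; P] := by
        simp only [hA, moving_average_order_eq_sum_endpointsCoeff hn]
    _ = σD2 * ∑ k ∈ range (n + 1), P[A k ^ 2]
          + μD ^ 2 * Var[fun ω => ∑ k ∈ range (n + 1), A k ω; P] :=
        h.variance_sum_mul
          (fun k _ => endpointsCoeff_induction (p := Measurable[m₁])
            ((ham.const_mul _).add_const 1) ((ham.sub hbm).const_mul _) (hbm.const_mul _).neg k)
          (fun k _ => hXm k)
          (fun k _ => endpointsCoeff_induction (p := fun Y => MemLp Y 2 P)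
            ((ha.const_mul _).add (memLp_const 1)) ((ha.sub hb).const_mul _) (hb.const_mul _).neg k)
          (fun k _ => hX k) (fun _ _ _ _ hkl => hXX hkl) (fun k _ => hμX k) (fun k _ => hσX k)
    _ = _ := by
        rw [sum_integral_sq_endpointsCoeff hab ha hb hμa hμb hσa hσb hn, hsumA,
          variance_add_const (X := fun ω => a ω - b ω) (ha.sub hb).1,
          hab.variance_fun_sub ha hb, hσa, hσb]
        ring

end Order

theorem bullwhip_measure_m_eq_one
    {Ω : Type*} [MeasurableSpace Ω] (P : Measure Ω) [IsProbabilityMeasure P]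
    (D : ℤ → Ω → ℝ) (L : ℤ → Ω → ℕ)
    (μD μL σD2 σL2 : ℝ)
    (hDmeas : ∀ t, Measurable (D t))
    (hLmeas : ∀ t, Measurable (L t))
    (hD2 : ∀ t, MemLp (D t) 2 P)
    (hL2 : ∀ t, MemLp (fun ω => (L t ω : ℝ)) 2 P)
    (hIndep : iIndepFun (β := fun i : ℤ ⊕ ℤ => match i with
        | Sum.inl _ => ℝ
        | Sum.inr _ => ℕ)
      (m := fun i => match i with
        | Sum.inl _ => (inferInstance : MeasurableSpace ℝ)
        | Sum.inr _ => (inferInstance : MeasurableSpace ℕ))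
      (fun i => match i with
        | Sum.inl t => D t
        | Sum.inr t => L t) P)
    (hμD : ∀ t, ∫ ω, D t ω ∂P = μD)
    (hσD : ∀ t, variance (D t) P = σD2)
    (hμL : ∀ t, ∫ ω, (L t ω : ℝ) ∂P = μL)
    (hσL : ∀ t, variance (fun ω => (L t ω : ℝ)) P = σL2)
    (n : ℕ) (hn : 1 ≤ n)
    (hσD2pos : 0 < σD2) :
    ∀ t : ℤ, variance (fun ω => ((L (t - 1) ω : ℝ) * ((n : ℝ)⁻¹ * ∑ i ∈ Finset.Icc 1 n, D (t - i) ω) - (L (t - 1 - 1) ω : ℝ) * ((n : ℝ)⁻¹ * ∑ i ∈ Finset.Icc 1 n, D ((t - 1) - i) ω) + D (t - 1) ω)) P / variance (D t) P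
      = 2 * σL2 * μD ^ 2 / σD2 + 2 * μL ^ 2 / (n : ℝ) ^ 2
        + 2 * (μL + σL2) / (n : ℝ) + 1 := by
  intro t
  obtain ⟨mD, mL, hDL, hDm, hLm⟩ :=
    hIndep.exists_indep_inl_inr (by rintro (s | s); exacts [hDmeas s, hLmeas s])
  have hLcast : ∀ s, Measurable[mL] fun ω => (L s ω : ℝ) :=
    fun s => (measurable_of_countable _).comp (hLm s)
  have hLL : IndepFun (fun ω => (L (t - 1) ω : ℝ)) (fun ω => (L (t - 1 - 1) ω : ℝ)) P :=
    (hIndep.indepFun (i := .inr (t - 1)) (j := .inr (t - 1 - 1))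
      (Sum.inr_injective.ne (by omega))).comp (measurable_of_countable _) (measurable_of_countable _)
  have hDD : Pairwise fun i j : ℕ => IndepFun (D (t - 1 - i)) (D (t - 1 - j)) P :=
    fun i j hij => hIndep.indepFun (i := .inl _) (j := .inl _) (by simpa using hij)
  have hq := variance_moving_average_order (X := fun i => D (t - 1 - i)) hDL.symm (hLcast _)
    (hLcast _) hLL (hL2 _) (hL2 _) (hμL _) (hμL _) (hσL _) (hσL _) (fun i => hDm (t - 1 - i))
    (fun _ => hD2 _) hDD (fun _ => hμD _) (fun _ => hσD _) (Nat.one_le_iff_ne_zero.1 hn)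
  have hsum : ∀ (s : ℤ) ω, ∑ i ∈ Icc 1 n, D (s - i) ω = ∑ i ∈ range n, D (s - ↑(i + 1)) ω :=
    fun s ω => sum_Icc_one_eq_sum_range (fun i => D (s - i) ω) n
  have hshift : ∀ i : ℕ, t - ((i + 1 : ℕ) : ℤ) = t - 1 - i := by intro i; push_cast; ring
  simp only [Nat.cast_zero, sub_zero] at hq
  simp only [hsum, hshift, hq, hσD]
  field_simp
  ring
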